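/- Let G be a connected {P₆, S₁,₂,₂}-free graph with efficient dominating set D, v ∈ D, and distance levels Nᵢ. Then no connected component of G[N₃] contains two vertices of D, and consequently every connected component of G[N₃] contains a universal vertex (a vertex adjacent to all other vertices of that component). -/

import Mathlib

/-!
The dominator of a vertex of `N₃` lies in `N₃` itself: were it at distance `4`, then together
with a shortest `v`-path to the vertex and the dominator of the level-`2` vertex on it, it would
span an induced `S₁,₂,₂`. Next, for `d ∈ D ∩ N₃` the set `N[d] ∩ N₃` is closed under adjacency
inside `N₃`: if `d - q - w` with `w ≁ d` and `w` dominated by `d' ≠ d`, a shortest path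
`v - a - b - d` yields an induced `S₁,₂,₂` (if `b ∼ w`) or an induced `P₆`
(`v a b q w d'` if `b ∼ q`, `v a b d q w` otherwise). Hence the component of `d` in `G[N₃]` is
`N[d] ∩ N₃`; it contains no other vertex of `D`, and every component of `G[N₃]` is of this form.
-/

open SimpleGraph

/-- `D` is an efficient dominating set. -/
def IsEffDomSet {V : Type*} (G : SimpleGraph V) (D : Set V) : Prop :=
  ∀ u : V, ∃! d : V, d ∈ D ∧ (d = u ∨ G.Adj d u)

/-- `S₁,₂,₂`: a chordless path 0-1-2-3-4 plus a vertex 5 adjacent only to 2. -/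
def S122 : SimpleGraph (Fin 6) :=
  SimpleGraph.fromEdgeSet {s(0, 1), s(1, 2), s(2, 3), s(3, 4), s(2, 5)}

/-- The vertex set of the connected component of `u` in the subgraph of `G`
induced on `S` (empty if `u ∉ S`). -/
def compOf {V : Type*} (G : SimpleGraph V) (S : Set V) (u : V) : Set V :=
  {w | ∃ (hu : u ∈ S) (hw : w ∈ S), (G.induce S).Reachable ⟨u, hu⟩ ⟨w, hw⟩}

namespace SimpleGraph

variable {W V : Type*} {H : SimpleGraph W} {G : SimpleGraph V}

lemma neighborSet_injective_of_forall_adj_iff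
    (hH : ∀ i j, (∀ k, H.Adj i k ↔ H.Adj j k) → i = j) : Function.Injective H.neighborSet :=
  fun i j h => hH i j fun k => Set.ext_iff.mp h k

/-- `f` is injective since vertices with equal images have equal neighbourhoods in `H`. -/
lemma nonempty_embedding_of_adj_iff (hH : Function.Injective H.neighborSet) (f : W → V)
    (hf : ∀ i j, G.Adj (f i) (f j) ↔ H.Adj i j) : Nonempty (H ↪g G) := by
  have hinj : Function.Injective f := fun i j hij =>
    hH <| Set.ext fun k => by simp only [mem_neighborSet, ← hf, hij]
  exact ⟨⟨⟨f, hinj⟩, hf _ _⟩⟩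

lemma Adj.dist_le_dist_add_one {u v w : V} (h : G.Adj v w) : G.dist u w ≤ G.dist u v + 1 := by
  have := h.diff_dist_adj (u := u)
  omega

lemma not_adj_of_dist_add_two_le {u x y : V} (h : G.dist u x + 2 ≤ G.dist u y) :
    ¬ G.Adj x y :=
  fun hxy => by have := hxy.dist_le_dist_add_one (u := u); omega

lemma exists_adj_dist_eq_of_dist_eq_add_one {u x : V} {n : ℕ} (h : G.dist u x = n + 1) :
    ∃ y, G.Adj y x ∧ G.dist u y = n := by
  have hr : G.Reachable u x := .of_dist_ne_zero (by omega)
  obtain ⟨p, hp⟩ := hr.exists_walk_length_eq_dist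
  have hnil : ¬ p.Nil := Walk.not_nil_of_ne (by rintro rfl; simp at h)
  refine ⟨p.penultimate, p.adj_penultimate hnil, le_antisymm ?_ ?_⟩
  · calc G.dist u p.penultimate ≤ p.dropLast.length := dist_le _
      _ = n := by rw [Walk.length_dropLast]; omega
  · have := (p.adj_penultimate hnil).dist_le_dist_add_one (u := u)
    omega

lemma exists_adj_adj_adj_of_dist_eq_three {v x : V} (h : G.dist v x = 3) :
    ∃ a b, G.Adj v a ∧ G.Adj a b ∧ G.Adj b x ∧ G.dist v a = 1 ∧ G.dist v b = 2 := by
  obtain ⟨b, hbx, hb⟩ := exists_adj_dist_eq_of_dist_eq_add_one h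
  obtain ⟨a, hab, ha⟩ := exists_adj_dist_eq_of_dist_eq_add_one hb
  exact ⟨a, b, dist_eq_one_iff_adj.mp ha, hab, hbx, ha, hb⟩

lemma nonempty_pathGraph_six_embedding (x₀ x₁ x₂ x₃ x₄ x₅ : V)
    (e01 : G.Adj x₀ x₁) (e12 : G.Adj x₁ x₂) (e23 : G.Adj x₂ x₃)
    (e34 : G.Adj x₃ x₄) (e45 : G.Adj x₄ x₅)
    (n02 : ¬G.Adj x₀ x₂) (n03 : ¬G.Adj x₀ x₃) (n04 : ¬G.Adj x₀ x₄) (n05 : ¬G.Adj x₀ x₅)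
    (n13 : ¬G.Adj x₁ x₃) (n14 : ¬G.Adj x₁ x₄) (n15 : ¬G.Adj x₁ x₅)
    (n24 : ¬G.Adj x₂ x₄) (n25 : ¬G.Adj x₂ x₅) (n35 : ¬G.Adj x₃ x₅) :
    Nonempty (pathGraph 6 ↪g G) := by
  refine nonempty_embedding_of_adj_iff
    (neighborSet_injective_of_forall_adj_iff (by simp only [pathGraph_adj]; decide))
    ![x₀, x₁, x₂, x₃, x₄, x₅] fun i j => ?_
  -- `simp` settles the pairs `i ≤ j` from the hypotheses; the rest are their mirror images.
  fin_cases i <;> fin_cases j <;> simp [pathGraph_adj, *] <;>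
    first | exact G.adj_symm ‹_› | exact fun h => absurd (G.adj_symm h) ‹_›

end SimpleGraph

lemma nonempty_S122_embedding {V : Type*} {G : SimpleGraph V} (x₀ x₁ x₂ x₃ x₄ x₅ : V)
    (e01 : G.Adj x₀ x₁) (e12 : G.Adj x₁ x₂) (e23 : G.Adj x₂ x₃)
    (e34 : G.Adj x₃ x₄) (e25 : G.Adj x₂ x₅)
    (n02 : ¬G.Adj x₀ x₂) (n03 : ¬G.Adj x₀ x₃) (n04 : ¬G.Adj x₀ x₄) (n05 : ¬G.Adj x₀ x₅)
    (n13 : ¬G.Adj x₁ x₃) (n14 : ¬G.Adj x₁ x₄) (n15 : ¬G.Adj x₁ x₅)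
    (n24 : ¬G.Adj x₂ x₄) (n35 : ¬G.Adj x₃ x₅) (n45 : ¬G.Adj x₄ x₅) :
    Nonempty (S122 ↪g G) := by
  refine nonempty_embedding_of_adj_iff
    (neighborSet_injective_of_forall_adj_iff (by simp only [S122, fromEdgeSet_adj]; decide))
    ![x₀, x₁, x₂, x₃, x₄, x₅] fun i j => ?_
  fin_cases i <;> fin_cases j <;> simp [S122, *] <;>
    first | exact G.adj_symm ‹_› | exact fun h => absurd (G.adj_symm h) ‹_›

section compOf

variable {V : Type*} {G : SimpleGraph V} {S : Set V} {u w z : V}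

lemma mem_compOf_self (hu : u ∈ S) : u ∈ compOf G S u :=
  ⟨hu, hu, Reachable.refl _⟩

lemma mem_compOf_of_adj (hu : u ∈ S) (hw : w ∈ S) (h : G.Adj u w) : w ∈ compOf G S u :=
  ⟨hu, hw, Adj.reachable (G := G.induce S) h⟩

lemma mem_compOf_of_mem_compOf (hz : z ∈ compOf G S u) (hw : w ∈ compOf G S u) :
    w ∈ compOf G S z := by
  obtain ⟨_, hz, hrz⟩ := hz
  obtain ⟨_, hw, hrw⟩ := hw
  exact ⟨hz, hw, hrz.symm.trans hrw⟩

lemma compOf_subset_of_forall_adj {P : Set V} (hu : u ∈ P)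
    (hP : ∀ x ∈ S, ∀ y ∈ S, x ∈ P → G.Adj x y → y ∈ P) : compOf G S u ⊆ P := by
  rintro w ⟨hu', hw, hr⟩
  suffices ∀ x : S, Relation.ReflTransGen (G.induce S).Adj ⟨u, hu'⟩ x → x.1 ∈ P from
    this ⟨w, hw⟩ ((reachable_iff_reflTransGen _ _).mp hr)
  intro x hx
  induction hx with
  | refl => exact hu
  | tail _ hxy ih => exact hP _ (Subtype.prop _) _ (Subtype.prop _) ih hxy

end compOf

namespace IsEffDomSet

variable {V : Type*} {G : SimpleGraph V} {D : Set V} (hD : IsEffDomSet G D)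
include hD

lemma eq_of_dominate {d₁ d₂ u : V} (hd₁ : d₁ ∈ D) (hd₂ : d₂ ∈ D)
    (h₁ : d₁ = u ∨ G.Adj d₁ u) (h₂ : d₂ = u ∨ G.Adj d₂ u) : d₁ = d₂ :=
  (hD u).unique ⟨hd₁, h₁⟩ ⟨hd₂, h₂⟩

lemma not_adj {d₁ d₂ : V} (hd₁ : d₁ ∈ D) (hd₂ : d₂ ∈ D) : ¬ G.Adj d₁ d₂ :=
  fun h => h.ne (hD.eq_of_dominate hd₁ hd₂ (.inr h) (.inl rfl))

lemma dist_eq_zero_or_three_le {v d : V} (hv : v ∈ D) (hd : d ∈ D) :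
    G.dist v d = 0 ∨ 3 ≤ G.dist v d := by
  by_contra! h
  obtain h1 | h2 : G.dist v d = 1 ∨ G.dist v d = 2 := by omega
  · exact hD.not_adj hv hd (dist_eq_one_iff_adj.mp h1)
  · obtain ⟨y, hyd, hy⟩ := exists_adj_dist_eq_of_dist_eq_add_one h2
    obtain rfl := hD.eq_of_dominate hv hd (.inr (dist_eq_one_iff_adj.mp hy)) (.inr hyd.symm)
    simp at h2

variable {v : V} (hv : v ∈ D)
include hv

lemma exists_adj_dist_eq_three_of_dist_eq_two {b : V} (hb : G.dist v b = 2) :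
    ∃ d ∈ D, G.Adj d b ∧ G.dist v d = 3 := by
  obtain ⟨d, ⟨hd, hdb⟩, -⟩ := hD b
  have := hD.dist_eq_zero_or_three_le hv hd
  rcases hdb with rfl | hdb
  · omega
  · have := hdb.dist_le_dist_add_one (u := v)
    have := hdb.symm.dist_le_dist_add_one (u := v)
    exact ⟨d, hd, hdb, by omega⟩

lemma dist_eq_three_of_dominate (hS : IsEmpty (S122 ↪g G)) {x d : V} (hx : G.dist v x = 3)
    (hd : d ∈ D) (hdx : d = x ∨ G.Adj d x) : G.dist v d = 3 := by
  rcases hdx with rfl | hdx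
  · exact hx
  have := hdx.dist_le_dist_add_one (u := v)
  have := hdx.symm.dist_le_dist_add_one (u := v)
  have := hD.dist_eq_zero_or_three_le hv hd
  by_contra hd3
  have hd4 : G.dist v d = 4 := by omega
  obtain ⟨a, b, hva, hab, hbx, ha, hb⟩ := exists_adj_adj_adj_of_dist_eq_three hx
  obtain ⟨e, he, heb, he3⟩ := hD.exists_adj_dist_eq_three_of_dist_eq_two hv hb
  have hxe : ¬ G.Adj x e := fun h => hd3 <| by
    rwa [hD.eq_of_dominate hd he (.inr hdx) (.inr h.symm)]
  have hv0 : G.dist v v = 0 := dist_self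
  have far {x y : V} (h : G.dist v x + 2 ≤ G.dist v y) : ¬ G.Adj x y :=
    not_adj_of_dist_add_two_le h
  exact not_nonempty_iff.mpr hS <| nonempty_S122_embedding v a b x d e
    hva hab hbx hdx.symm heb.symm
    (far (by omega)) (far (by omega))
    (far (by omega)) (far (by omega))
    (far (by omega)) (far (by omega))
    (far (by omega)) (far (by omega))
    hxe (hD.not_adj hd he)

lemma adj_of_adj_of_adj (hP6 : IsEmpty (pathGraph 6 ↪g G)) (hS : IsEmpty (S122 ↪g G))
    {d q w : V} (hd : d ∈ D) (hd3 : G.dist v d = 3) (hq3 : G.dist v q = 3)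
    (hw3 : G.dist v w = 3) (hdq : G.Adj d q) (hqw : G.Adj q w) (hwd : w ≠ d) :
    G.Adj d w := by
  by_contra hdw
  obtain ⟨e, ⟨he, hew⟩, -⟩ := hD w
  have he3 := hD.dist_eq_three_of_dominate hv hS hw3 he hew
  have hed : e ≠ d := by
    rintro rfl
    rcases hew with rfl | h
    exacts [hwd rfl, hdw h]
  rcases hew with rfl | hew
  · exact hed (hD.eq_of_dominate he hd (.inr hqw.symm) (.inr hdq))
  have heq : ¬ G.Adj q e := fun h => hed (hD.eq_of_dominate he hd (.inr h.symm) (.inr hdq))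
  obtain ⟨a, b, hva, hab, hbd, ha, hb⟩ := exists_adj_adj_adj_of_dist_eq_three hd3
  have hbe : ¬ G.Adj b e := fun h => hed (hD.eq_of_dominate he hd (.inr h.symm) (.inr hbd.symm))
  have hv0 : G.dist v v = 0 := dist_self
  have far {x y : V} (h : G.dist v x + 2 ≤ G.dist v y) : ¬ G.Adj x y :=
    not_adj_of_dist_add_two_le h
  by_cases hbw : G.Adj b w
  · exact not_nonempty_iff.mpr hS <| nonempty_S122_embedding v a b w e d
      hva hab hbw hew.symm hbd
      (far (by omega)) (far (by omega))
      (far (by omega)) (far (by omega))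
      (far (by omega)) (far (by omega))
      (far (by omega)) hbe (fun h => hdw h.symm)
      (hD.not_adj he hd)
  by_cases hbq : G.Adj b q
  · exact not_nonempty_iff.mpr hP6 <| nonempty_pathGraph_six_embedding v a b q w e
      hva hab hbq hqw hew.symm
      (far (by omega)) (far (by omega))
      (far (by omega)) (far (by omega))
      (far (by omega)) (far (by omega))
      (far (by omega)) hbw hbe heq
  · exact not_nonempty_iff.mpr hP6 <| nonempty_pathGraph_six_embedding v a b d q w
      hva hab hbd hdq hqw
      (far (by omega)) (far (by omega))
      (far (by omega)) (far (by omega))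
      (far (by omega)) (far (by omega))
      (far (by omega)) hbq hbw hdw

lemma compOf_subset_closedNeighborhood (hP6 : IsEmpty (pathGraph 6 ↪g G))
    (hS : IsEmpty (S122 ↪g G)) {d : V} (hd : d ∈ D) :
    compOf G {x | G.dist v x = 3} d ⊆ {w | d = w ∨ G.Adj d w} := by
  intro w hw
  refine compOf_subset_of_forall_adj (.inl rfl) ?_ hw
  rintro x hx y hy (rfl | hdx) hxy
  · exact .inr hxy
  · by_cases hyd : y = d
    · exact .inl hyd.symm
    · exact .inr (hD.adj_of_adj_of_adj hv hP6 hS hd hw.1 hx hy hdx hxy hyd)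

end IsEffDomSet

theorem stmt13_general {V : Type*} (G : SimpleGraph V)
    (hP6free : IsEmpty (SimpleGraph.pathGraph 6 ↪g G))
    (hSfree : IsEmpty (S122 ↪g G))
    (D : Set V) (hD : IsEffDomSet G D) (v : V) (hv : v ∈ D)
    (N3 : Set V) (hN3 : N3 = {w | G.dist v w = 3}) :
    (∀ d₁ ∈ D, ∀ d₂ ∈ D, d₂ ∈ compOf G N3 d₁ → d₁ = d₂) ∧
    (∀ u ∈ N3, ∃ z ∈ compOf G N3 u, ∀ w ∈ compOf G N3 u, w ≠ z → G.Adj z w) := by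
  subst hN3
  have hcomp {d : V} (hd : d ∈ D) := hD.compOf_subset_closedNeighborhood hv hP6free hSfree hd
  refine ⟨fun d₁ hd₁ d₂ hd₂ h => ?_, fun u hu => ?_⟩
  · rcases hcomp hd₁ h with h | h
    exacts [h, absurd h (hD.not_adj hd₁ hd₂)]
  · obtain ⟨d, ⟨hd, hdu⟩, -⟩ := hD u
    have hd3 := hD.dist_eq_three_of_dominate hv hSfree hu hd hdu
    have hdu' : d ∈ compOf G {x | G.dist v x = 3} u := by
      rcases hdu with rfl | hdu
      exacts [mem_compOf_self hu, mem_compOf_of_adj hu hd3 hdu.symm]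
    refine ⟨d, hdu', fun w hw hwd => ?_⟩
    rcases hcomp hd (mem_compOf_of_mem_compOf hdu' hw) with rfl | h
    exacts [absurd rfl hwd, h]

theorem stmt13 {V : Type*} [Fintype V] (G : SimpleGraph V) (hG : G.Connected)
    (hP6free : IsEmpty (SimpleGraph.pathGraph 6 ↪g G))
    (hSfree : IsEmpty (S122 ↪g G))
    (D : Set V) (hD : IsEffDomSet G D) (v : V) (hv : v ∈ D)
    (N3 : Set V) (hN3 : N3 = {w | G.dist v w = 3}) :
    (∀ d₁ ∈ D, ∀ d₂ ∈ D, d₂ ∈ compOf G N3 d₁ → d₁ = d₂) ∧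
    (∀ u ∈ N3, ∃ z ∈ compOf G N3 u, ∀ w ∈ compOf G N3 u, w ≠ z → G.Adj z w) :=
  stmt13_general G hP6free hSfree D hD v hv N3 hN3
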